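/- arXiv:2504.02117 — 3 statements merged into one kernel-verified Lean document; each statement's English description precedes it below -/
import Mathlib

section
/- Let A₁ ∈ ℝ^{sm×sm} be the block lower bidiagonal matrix with diagonal blocks (1/τ)I_m and whose only off-diagonal nonzero entries are −1/τ in column m, 2m, … (i.e., each of the m rows of block-row i+1 has entry −1/τ in the last column of block i), and let A₂ = blockdiag(A,…,A) with A the Butcher matrix. If the DIRK method is stiffly accurate, then the system [A₁ ⊗ M + A₂ ⊗ K] vec(Y) = [A₂ ⊗ I_N] vec(B) + vec(B₀), with B₀ = ((1/τ)Myⁿ,…,(1/τ)Myⁿ, 0,…,0) (first m columns only), holds if and only if the columns of Y satisfy the DIRK stage equations for s consecutive time steps with y^{n+i} := y^{(n+i−1,m)} for i = 1,…,s−1. -/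
open Matrix
open scoped Kronecker

/-- `vecCols Y` stacks the columns of `Y` into one long vector. -/
def vecCols {N : ℕ} {ι : Type*} (Y : Matrix (Fin N) ι ℝ) : ι × Fin N → ℝ :=
  fun p => Y p.2 p.1

/-- The block lower bidiagonal time-stepping matrix `A₁` for `s` consecutive time steps:
diagonal entries `1/τ`, and entries `−1/τ` coupling every stage of step `i+1` to the
last stage of step `i`. -/
noncomputable def A1big (s' m' : ℕ) (τ : ℝ) :
    Matrix ((Fin (s' + 1) × Fin (m' + 1))) ((Fin (s' + 1) × Fin (m' + 1))) ℝ :=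
  fun p q =>
    if p = q then 1 / τ
    else if ((p.1 : ℕ) = (q.1 : ℕ) + 1 ∧ q.2 = Fin.last m') then -(1 / τ) else 0

/-- The block diagonal matrix `A₂ = blockdiag(A,…,A)` built from the Butcher matrix. -/
def A2big {s' m' : ℕ} (A : Matrix (Fin (m' + 1)) (Fin (m' + 1)) ℝ) :
    Matrix ((Fin (s' + 1) × Fin (m' + 1))) ((Fin (s' + 1) × Fin (m' + 1))) ℝ :=
  fun p q => if p.1 = q.1 then A p.2 q.2 else 0

lemma A1big_sum {s' m' : ℕ} (τ : ℝ) (g : Fin (s'+1) × Fin (m'+1) → ℝ)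
    (i : Fin (s'+1)) (k : Fin (m'+1)) :
    ∑ q, A1big s' m' τ (i,k) q * g q
      = (1/τ) * g (i,k) - (if i = 0 then 0 else (1/τ) * g (i-1, Fin.last m')) := by
  have hsplit : ∀ q, A1big s' m' τ (i,k) q * g q
      = (if (i,k) = q then (1/τ) * g q else 0)
        + (if ((i:ℕ) = (q.1:ℕ)+1 ∧ q.2 = Fin.last m') then -((1/τ) * g q) else 0) := by
    intro q
    by_cases h1 : (i,k) = q
    · have h2 : ¬((i:ℕ) = (q.1:ℕ)+1 ∧ q.2 = Fin.last m') := by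
        rintro ⟨h, -⟩
        subst h1
        simp at h
      simp [A1big, h1, h2]
    · by_cases h2 : ((i:ℕ) = (q.1:ℕ)+1 ∧ q.2 = Fin.last m')
      · simp [A1big, h1, h2]
      · simp [A1big, h1, h2]
  rw [Finset.sum_congr rfl (fun q _ => hsplit q), Finset.sum_add_distrib,
    Finset.sum_ite_eq Finset.univ (i,k) (fun q => (1/τ) * g q)]
  simp only [Finset.mem_univ, if_true]
  by_cases hi : i = 0
  · have : ∀ q : Fin (s'+1) × Fin (m'+1),
        (if ((i:ℕ) = (q.1:ℕ)+1 ∧ q.2 = Fin.last m') then -((1/τ) * g q) else 0) = 0 := by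
      intro q
      rw [if_neg]
      rintro ⟨h, -⟩
      rw [hi] at h
      simp at h
    simp [hi, Finset.sum_congr rfl (fun q _ => this q)]
  · have hcond : ∀ q : Fin (s'+1) × Fin (m'+1),
        ((i:ℕ) = (q.1:ℕ)+1 ∧ q.2 = Fin.last m') ↔ q = (i-1, Fin.last m') := by
      intro q
      constructor
      · rintro ⟨h1, h2⟩
        have : q.1 = i - 1 := by
          have hiv : (i:ℕ) ≠ 0 := fun h => hi (Fin.ext h)
          have : ((i-1 : Fin (s'+1)) : ℕ) = (i:ℕ) - 1 := by
            rw [Fin.coe_sub_one, if_neg hi]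
          apply Fin.ext
          omega
        exact Prod.ext this h2
      · rintro rfl
        refine ⟨?_, rfl⟩
        show (i:ℕ) = ((i-1 : Fin (s'+1)):ℕ) + 1
        have hiv : (i:ℕ) ≠ 0 := fun h => hi (Fin.ext h)
        have : ((i-1 : Fin (s'+1)) : ℕ) = (i:ℕ) - 1 := by
          rw [Fin.coe_sub_one, if_neg hi]
        omega
    have : ∀ q : Fin (s'+1) × Fin (m'+1),
        (if ((i:ℕ) = (q.1:ℕ)+1 ∧ q.2 = Fin.last m') then -((1/τ) * g q) else 0)
          = (if q = (i-1, Fin.last m') then -((1/τ) * g q) else 0) := by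
      intro q; exact if_congr (hcond q) rfl rfl
    rw [Finset.sum_congr rfl (fun q _ => this q),
      Finset.sum_ite_eq' Finset.univ ((i-1, Fin.last m')) (fun q => -((1/τ) * g q))]
    simp [hi]
    ring

lemma A2big_sum {s' m' : ℕ} (A : Matrix (Fin (m'+1)) (Fin (m'+1)) ℝ)
    (g : Fin (s'+1) × Fin (m'+1) → ℝ) (i : Fin (s'+1)) (k : Fin (m'+1)) :
    ∑ q, A2big (s' := s') A (i,k) q * g q = ∑ j, A k j * g (i,j) := by
  rw [Fintype.sum_prod_type]
  rw [Finset.sum_eq_single i]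
  · simp [A2big]
  · intro b _ hb
    have : ∀ j, A2big (s' := s') A (i,k) (b,j) * g (b,j) = 0 := by
      intro j; simp [A2big, Ne.symm hb]
    simp [this]
  · simp

lemma kron_mulVec_entry {N : ℕ} {ι : Type*} [Fintype ι] [DecidableEq ι]
    (P : Matrix ι ι ℝ) (M : Matrix (Fin N) (Fin N) ℝ)
    (v : ι × Fin N → ℝ) (p : ι) (r : Fin N) :
    ((P ⊗ₖ M) *ᵥ v) (p, r) = ∑ q, P p q * (∑ c, M r c * v (q, c)) := by
  simp [Matrix.mulVec, dotProduct, Fintype.sum_prod_type, Finset.mul_sum, mul_assoc]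

/-- All-at-once system for `s` consecutive time steps of a stiffly accurate `m`-stage
DIRK method: `[A₁ ⊗ M + A₂ ⊗ K] vec(Y) = [A₂ ⊗ I_N] vec(B) + vec(B₀)` (with `B₀`
nonzero only in the first `m` columns, equal to `(1/τ)M yⁿ`) holds iff the columns of
`Y` satisfy the DIRK stage equations for the `s` consecutive steps, with the previous
value of step `i` given by `yⁿ` for `i = 0` and by the last stage `y^{(n+i−1,m)}` of
the preceding step otherwise. -/
theorem all_at_once_multistep_iff_dirk {N s' m' : ℕ}
    (M K : Matrix (Fin N) (Fin N) ℝ)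
    (A : Matrix (Fin (m' + 1)) (Fin (m' + 1)) ℝ)
    (hA : ∀ k j : Fin (m' + 1), k < j → A k j = 0)
    (bw : Fin (m' + 1) → ℝ)
    (hsa : ∀ i, bw i = A (Fin.last m') i)
    (τ : ℝ) (hτ : 0 < τ) (yn : Fin N → ℝ)
    (Y B : Matrix (Fin N) (Fin (s' + 1) × Fin (m' + 1)) ℝ)
    (B₀ : Matrix (Fin N) (Fin (s' + 1) × Fin (m' + 1)) ℝ)
    (hB₀ : B₀ = Matrix.of fun r p =>
      if p.1 = 0 then ((1 / τ) • (M *ᵥ yn)) r else 0)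
    (prev : Fin (s' + 1) → Fin N → ℝ)
    (hprev : prev = fun i =>
      if i = 0 then yn else fun r => Y r (i - 1, Fin.last m')) :
    (A1big s' m' τ ⊗ₖ M + A2big A ⊗ₖ K) *ᵥ vecCols Y =
        (A2big (s' := s') A ⊗ₖ (1 : Matrix (Fin N) (Fin N) ℝ)) *ᵥ vecCols B
          + vecCols B₀ ↔
      ∀ (i : Fin (s' + 1)) (k : Fin (m' + 1)),
        (1 / τ) • (M *ᵥ ((fun r => Y r (i, k)) - prev i)) +
            ∑ j ∈ Finset.univ.filter (fun j => j ≤ k),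
              A k j • (K *ᵥ fun r => Y r (i, j)) =
          ∑ j ∈ Finset.univ.filter (fun j => j ≤ k),
            A k j • (fun r => B r (i, j)) := by
  subst hB₀ hprev
  have hfilter : ∀ (k : Fin (m'+1)) (f : Fin (m'+1) → ℝ),
      ∑ j ∈ Finset.univ.filter (fun j => j ≤ k), A k j * f j = ∑ j, A k j * f j := by
    intro k f
    apply Finset.sum_subset (Finset.subset_univ _)
    intro j _ hj
    simp only [Finset.mem_filter, Finset.mem_univ, true_and] at hj
    rw [hA k j (lt_of_not_ge hj), zero_mul]
  have key : ∀ (i : Fin (s'+1)) (k : Fin (m'+1)) (r : Fin N),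
      (((A1big s' m' τ ⊗ₖ M + A2big A ⊗ₖ K) *ᵥ vecCols Y) ((i,k), r) =
        (((A2big (s' := s') A ⊗ₖ (1 : Matrix (Fin N) (Fin N) ℝ)) *ᵥ vecCols B)
          + vecCols (Matrix.of fun (r : Fin N) (p : Fin (s'+1) × Fin (m'+1)) =>
              if p.1 = 0 then ((1 / τ) • (M *ᵥ yn)) r else 0)) ((i,k), r))
      ↔ ((1/τ) * ((M *ᵥ ((fun r => Y r (i,k))
            - (if i = 0 then yn else fun r => Y r (i-1, Fin.last m')))) r)
          + ∑ j ∈ Finset.univ.filter (fun j => j ≤ k), A k j * ((K *ᵥ fun r => Y r (i,j)) r)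
        = ∑ j ∈ Finset.univ.filter (fun j => j ≤ k), A k j * B r (i,j)) := by
    intro i k r
    rw [Matrix.add_mulVec, Pi.add_apply, Pi.add_apply]
    rw [kron_mulVec_entry, kron_mulVec_entry, kron_mulVec_entry]
    rw [A1big_sum, A2big_sum, A2big_sum]
    have hone : ∀ q, (∑ c, (1 : Matrix (Fin N) (Fin N) ℝ) r c * vecCols B (q, c)) = B r q := by
      intro q
      simp [Matrix.one_apply, vecCols]
    simp only [hone]
    rw [hfilter k (fun j => ((K *ᵥ fun r => Y r (i,j)) r)),
      hfilter k (fun j => B r (i,j))]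
    rw [Matrix.mulVec_sub, Pi.sub_apply]
    have hM : ∀ q, (∑ c, M r c * vecCols Y (q, c)) = (M *ᵥ fun c => Y c q) r := by
      intro q
      simp [Matrix.mulVec, dotProduct, vecCols]
    simp only [hM]
    simp only [vecCols, Matrix.of_apply]
    have hK2 : ∀ j : Fin (m'+1), (∑ c, K r c * Y c (i,j)) = (K *ᵥ fun c => Y c (i,j)) r := by
      intro j
      simp [Matrix.mulVec, dotProduct]
    simp only [hK2]
    by_cases hi : i = 0
    · simp only [hi, if_pos rfl, ite_true, Pi.smul_apply, smul_eq_mul]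
      rw [mul_sub]
      constructor <;> intro h <;> linarith [h]
    · simp only [hi, ite_false, if_neg hi]
      rw [mul_sub]
      constructor <;> intro h <;> linarith [h]
  rw [funext_iff]
  constructor
  · intro h i k
    funext r
    have H := (key i k r).1 (h ((i,k), r))
    simp only [Pi.add_apply, Pi.smul_apply, Finset.sum_apply, smul_eq_mul]
    exact H
  · intro h p
    obtain ⟨⟨i,k⟩, r⟩ := p
    refine (key i k r).2 ?_
    have H := congrFun (h i k) r
    simp only [Pi.add_apply, Pi.smul_apply, Finset.sum_apply, smul_eq_mul] at H
    exact H
end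

section
/- In the van Genuchten–Mualem model, the saturation ratio S(ψ) = θ(ψ)/θ_S (with θ as above and θ_R ≥ 0) lies in (0,1] for all ψ, and the conductivity K(ψ) = K_S·S(ψ)^{1/2}·[1 − (1 − S(ψ)^{n/(n−1)})^{(n−1)/n}]² satisfies 0 < K(ψ) ≤ K_S for all ψ ∈ ℝ, with K(ψ) = K_S for ψ > 0. -/
/-- The van Genuchten–Mualem water-content function. -/
noncomputable def vanGenuchtenTheta (θR θS α n : ℝ) (ψ : ℝ) : ℝ :=
  if ψ ≤ 0 then θR + (θS - θR) * (1 / (1 + (-(α * ψ)) ^ n)) ^ ((n - 1) / n)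
  else θS

/-- The saturation ratio `S(ψ) = θ(ψ)/θ_S`. -/
noncomputable def vanGenuchtenSat (θR θS α n : ℝ) (ψ : ℝ) : ℝ :=
  vanGenuchtenTheta θR θS α n ψ / θS

/-- The van Genuchten–Mualem conductivity
`K(ψ) = K_S·S(ψ)^{1/2}·[1 − (1 − S(ψ)^{n/(n−1)})^{(n−1)/n}]²`. -/
noncomputable def vanGenuchtenK (θR θS α n KS : ℝ) (ψ : ℝ) : ℝ :=
  KS * (vanGenuchtenSat θR θS α n ψ) ^ ((1 : ℝ) / 2) *
    (1 - (1 - (vanGenuchtenSat θR θS α n ψ) ^ (n / (n - 1))) ^ ((n - 1) / n)) ^ (2 : ℕ)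

/-- With `0 ≤ θ_R < θ_S`, `α > 0`, `n > 1`, `K_S > 0`: the saturation ratio lies in
`(0,1]` for all `ψ`, the conductivity satisfies `0 < K(ψ) ≤ K_S` for all `ψ`, and
`K(ψ) = K_S` for `ψ > 0`. -/
theorem vanGenuchtenK_properties (θR θS α n KS : ℝ)
    (hθR : 0 ≤ θR) (hθ : θR < θS) (hα : 0 < α) (hn : 1 < n) (hKS : 0 < KS) :
    (∀ ψ : ℝ, vanGenuchtenSat θR θS α n ψ ∈ Set.Ioc (0 : ℝ) 1) ∧
      (∀ ψ : ℝ, 0 < vanGenuchtenK θR θS α n KS ψ ∧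
        vanGenuchtenK θR θS α n KS ψ ≤ KS) ∧
      (∀ ψ : ℝ, 0 < ψ → vanGenuchtenK θR θS α n KS ψ = KS) := by
  have hθS : (0:ℝ) < θS := lt_of_le_of_lt hθR hθ
  have hn1 : (0:ℝ) < n - 1 := by linarith
  have hn0 : (0:ℝ) < n := by linarith
  have hexp : (0:ℝ) < (n - 1) / n := div_pos hn1 hn0
  have hexp2 : (0:ℝ) < n / (n - 1) := div_pos hn0 hn1
  have hSat : ∀ ψ : ℝ, vanGenuchtenSat θR θS α n ψ ∈ Set.Ioc (0 : ℝ) 1 := by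
    intro ψ
    unfold vanGenuchtenSat vanGenuchtenTheta
    split_ifs with h
    · have hbase : (0:ℝ) ≤ -(α * ψ) := by nlinarith
      have hx : (0:ℝ) ≤ (-(α * ψ)) ^ n := Real.rpow_nonneg hbase n
      have h1 : (0:ℝ) < 1 + (-(α * ψ)) ^ n := by linarith
      have ht0 : 0 < (1 / (1 + (-(α * ψ)) ^ n)) ^ ((n - 1) / n) :=
        Real.rpow_pos_of_pos (by positivity) _
      have ht1 : (1 / (1 + (-(α * ψ)) ^ n)) ^ ((n - 1) / n) ≤ 1 := by
        apply Real.rpow_le_one (by positivity) _ hexp.le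
        rw [div_le_one h1]; linarith
      constructor
      · apply div_pos _ hθS; nlinarith
      · rw [div_le_one hθS]; nlinarith
    · rw [div_self hθS.ne']
      exact ⟨one_pos, le_refl 1⟩
  refine ⟨hSat, ?_, ?_⟩
  · intro ψ
    obtain ⟨hs0, hs1⟩ := hSat ψ
    set s := vanGenuchtenSat θR θS α n ψ with hs
    have ha0 : 0 < s ^ ((1:ℝ)/2) := Real.rpow_pos_of_pos hs0 _
    have ha1 : s ^ ((1:ℝ)/2) ≤ 1 := Real.rpow_le_one hs0.le hs1 (by norm_num)
    have hb0 : 0 < s ^ (n / (n - 1)) := Real.rpow_pos_of_pos hs0 _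
    have hb1 : s ^ (n / (n - 1)) ≤ 1 := Real.rpow_le_one hs0.le hs1 hexp2.le
    have hc0 : 0 ≤ (1 - s ^ (n / (n - 1))) ^ ((n - 1) / n) :=
      Real.rpow_nonneg (by linarith) _
    have hc1 : (1 - s ^ (n / (n - 1))) ^ ((n - 1) / n) < 1 :=
      Real.rpow_lt_one (by linarith) (by linarith) hexp
    have hd0 : 0 < 1 - (1 - s ^ (n / (n - 1))) ^ ((n - 1) / n) := by linarith
    have hd1 : 1 - (1 - s ^ (n / (n - 1))) ^ ((n - 1) / n) ≤ 1 := by linarith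
    constructor
    · unfold vanGenuchtenK
      rw [← hs]
      positivity
    · unfold vanGenuchtenK
      rw [← hs]
      have hd2 : (1 - (1 - s ^ (n / (n - 1))) ^ ((n - 1) / n)) ^ (2:ℕ) ≤ 1 := by
        nlinarith
      calc KS * s ^ ((1:ℝ)/2) * (1 - (1 - s ^ (n / (n - 1))) ^ ((n - 1) / n)) ^ (2:ℕ)
          ≤ KS * 1 * 1 := by
            apply mul_le_mul (mul_le_mul le_rfl ha1 ha0.le hKS.le) hd2 (by positivity)
              (by positivity)
        _ = KS := by ring
  · intro ψ hψ
    have hS1 : vanGenuchtenSat θR θS α n ψ = 1 := by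
      unfold vanGenuchtenSat vanGenuchtenTheta
      rw [if_neg (not_le.mpr hψ), div_self hθS.ne']
    unfold vanGenuchtenK
    rw [hS1, Real.one_rpow, Real.one_rpow, sub_self,
      Real.zero_rpow (ne_of_gt hexp), sub_zero, one_pow, mul_one, mul_one]
end

section
/- Let J = (1/τ)M + βK be invertible and consider the fixed-point iteration Y^j = J^{-1}·G(Y^{j-1}), where G(Y) = −M·Y·(A₁ − (1/τ)I_m)ᵀ − K·Y·(A₂ − βI_m)ᵀ + C. If A₁ − (1/τ)I_m and A₂ − βI_m are strictly lower triangular and nilpotent of index at most m, and the map Y ↦ J^{-1}G(Y) is affine with linear part L(Y) = −J^{-1}(M·Y·(A₁−(1/τ)I_m)ᵀ + K·Y·(A₂−βI_m)ᵀ), then L^m = 0, and hence the fixed-point iteration converges to the exact solution of the matrix equation in at most m iterations. -/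
open Matrix

/-- Fixed-point iteration for the split matrix equation: if `J = (1/τ)M + βK` is
invertible, the split-off parts `A₁ − (1/τ)I` and `A₂ − βI` are strictly lower
triangular, `L` is the linear part of the affine map `Y ↦ J⁻¹G(Y)` and `F` the full
affine iteration map, then `L^m = 0` and the iteration reaches the exact solution of
the matrix equation `M·Y·A₁ᵀ + K·Y·A₂ᵀ = C` in at most `m` iterations from any
starting value. -/
theorem fixed_point_iteration_converges {N m : ℕ}
    (M K : Matrix (Fin N) (Fin N) ℝ) (τ β : ℝ) (hτ : 0 < τ)
    (A₁ A₂ : Matrix (Fin m) (Fin m) ℝ)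
    (hA₁ : A₁ = (1 / τ) • (1 : Matrix (Fin m) (Fin m) ℝ))
    (hS₁ : ∀ i j : Fin m, i ≤ j → (A₁ - (1 / τ) • (1 : Matrix (Fin m) (Fin m) ℝ)) i j = 0)
    (hS₂ : ∀ i j : Fin m, i ≤ j → (A₂ - β • (1 : Matrix (Fin m) (Fin m) ℝ)) i j = 0)
    (C : Matrix (Fin N) (Fin m) ℝ)
    (J : Matrix (Fin N) (Fin N) ℝ)
    (hJdef : J = (1 / τ) • M + β • K) (hJ : IsUnit J)
    (L F : Matrix (Fin N) (Fin m) ℝ → Matrix (Fin N) (Fin m) ℝ)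
    (hL : ∀ Y, L Y = -(J⁻¹ * (M * Y * (A₁ - (1 / τ) • (1 : Matrix (Fin m) (Fin m) ℝ))ᵀ
      + K * Y * (A₂ - β • (1 : Matrix (Fin m) (Fin m) ℝ))ᵀ)))
    (hF : ∀ Y, F Y = J⁻¹ *
      (-(M * Y * (A₁ - (1 / τ) • (1 : Matrix (Fin m) (Fin m) ℝ))ᵀ)
        - K * Y * (A₂ - β • (1 : Matrix (Fin m) (Fin m) ℝ))ᵀ + C)) :
    (∀ Y, L^[m] Y = 0) ∧
      (∀ Y₀, M * (F^[m] Y₀) * A₁ᵀ + K * (F^[m] Y₀) * A₂ᵀ = C) := by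
  set S := A₂ - β • (1 : Matrix (Fin m) (Fin m) ℝ) with hSdef
  have hA1z : A₁ - (1 / τ) • (1 : Matrix (Fin m) (Fin m) ℝ) = 0 := by
    rw [hA₁]; simp
  -- strictly lower triangular powers vanish
  have hSpow : ∀ k (i j : Fin m), (i : ℕ) < (j : ℕ) + k → (S ^ k) i j = 0 := by
    intro k
    induction k with
    | zero =>
      intro i j h
      simp only [Nat.add_zero] at h
      rw [pow_zero, Matrix.one_apply_ne (Fin.ne_of_val_ne (Nat.ne_of_lt h))]
    | succ k ih =>
      intro i j h
      rw [pow_succ, Matrix.mul_apply]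
      apply Finset.sum_eq_zero
      intro l _
      by_cases hl : (i : ℕ) < (l : ℕ) + k
      · rw [ih i l hl, zero_mul]
      · have hlj : l ≤ j := by
          rw [Fin.le_def]; omega
        rw [hS₂ l j hlj, mul_zero]
  have hSm : S ^ m = 0 := by
    ext i j
    have := hSpow m i j (by omega)
    simpa using this
  have hSTm : (Sᵀ) ^ m = 0 := by
    rw [← Matrix.transpose_pow, hSm, Matrix.transpose_zero]
  set P := -(J⁻¹ * K) with hP
  have hL' : ∀ Y, L Y = P * Y * Sᵀ := by
    intro Y
    rw [hL, hA1z]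
    simp [hP, Matrix.mul_assoc]
  have hLiter : ∀ k Y, L^[k] Y = P ^ k * Y * Sᵀ ^ k := by
    intro k
    induction k with
    | zero => intro Y; simp
    | succ k ih =>
      intro Y
      rw [Function.iterate_succ_apply, hL', ih, pow_succ, pow_succ']
      simp [Matrix.mul_assoc]
  have hF' : ∀ Y, F Y = P * Y * Sᵀ + J⁻¹ * C := by
    intro Y
    rw [hF, hA1z]
    simp [hP, Matrix.mul_add, Matrix.mul_assoc, sub_eq_add_neg, add_comm]
  have hJmul : J * J⁻¹ = 1 :=
    Matrix.mul_nonsing_inv J ((Matrix.isUnit_iff_isUnit_det J).mp hJ)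
  have hJP : J * P = -K := by
    rw [hP, Matrix.mul_neg, ← Matrix.mul_assoc, hJmul, Matrix.one_mul]
  have hFsub : ∀ a b, F a - F b = P * (a - b) * Sᵀ := by
    intro a b
    rw [hF', hF', Matrix.mul_sub, Matrix.sub_mul]
    abel
  have hdiff : ∀ k Y, F^[k + 1] Y - F^[k] Y = P ^ k * (F Y - Y) * Sᵀ ^ k := by
    intro k
    induction k with
    | zero => intro Y; simp
    | succ k ih =>
      intro Y
      calc F^[k + 1 + 1] Y - F^[k + 1] Y
          = F (F^[k + 1] Y) - F (F^[k] Y) := by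
            rw [← Function.iterate_succ_apply' F (k + 1), ← Function.iterate_succ_apply' F k]
        _ = P * (F^[k + 1] Y - F^[k] Y) * Sᵀ := hFsub _ _
        _ = P ^ (k + 1) * (F Y - Y) * Sᵀ ^ (k + 1) := by
            rw [ih, pow_succ', pow_succ]
            simp [Matrix.mul_assoc]
  constructor
  · intro Y
    rw [hLiter, hSTm, Matrix.mul_zero]
  · intro Y₀
    cases m with
    | zero => exact Subsingleton.elim _ _
    | succ n =>
      set Z := F^[n + 1] Y₀ with hZ
      set W := F^[n] Y₀ with hW
      have hA2 : A₂ = β • (1 : Matrix (Fin (n+1)) (Fin (n+1)) ℝ) + S := by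
        rw [hSdef]; abel
      have key : M * Z * A₁ᵀ + K * Z * A₂ᵀ = J * Z + K * Z * Sᵀ := by
        rw [hA₁, hA2, hJdef]
        simp only [Matrix.transpose_add, Matrix.transpose_smul, Matrix.transpose_one,
          Matrix.mul_add, Matrix.add_mul, Matrix.mul_smul, Matrix.smul_mul,
          Matrix.mul_one]
        abel
      have hZF : Z = F W := Function.iterate_succ_apply' F n Y₀
      have hJZ : J * Z = -(K * W * Sᵀ) + C := by
        rw [hZF, hF' W, Matrix.mul_add, ← Matrix.mul_assoc, ← Matrix.mul_assoc, hJP,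
          ← Matrix.mul_assoc, hJmul, Matrix.one_mul, Matrix.neg_mul, Matrix.neg_mul]
      have hZW : Z - W = P ^ n * (F Y₀ - Y₀) * Sᵀ ^ n := hdiff n Y₀
      have hzero : K * (Z - W) * Sᵀ = 0 := by
        rw [hZW]
        calc K * (P ^ n * (F Y₀ - Y₀) * Sᵀ ^ n) * Sᵀ
            = K * (P ^ n * (F Y₀ - Y₀)) * (Sᵀ ^ n * Sᵀ) := by
              simp [Matrix.mul_assoc]
          _ = K * (P ^ n * (F Y₀ - Y₀)) * Sᵀ ^ (n + 1) := by rw [pow_succ]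
          _ = 0 := by rw [hSTm, Matrix.mul_zero]
      have h2 : K * Z * Sᵀ = K * W * Sᵀ := by
        rwa [Matrix.mul_sub, Matrix.sub_mul, sub_eq_zero] at hzero
      rw [key, hJZ, h2]
      abel
end
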